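/- The half-quasi-shuffle identity: with Δ the discrete difference operator and 𝚽 the expanding-window sequence-to-sequence transform x ↦ (Φ(x_1), Φ(x_1,x_2), ..., Φ(x_1,...,x_L)), one has ⟨e_{ℓ_1} ⊗_{(3)} e_{ℓ_2}, Φ(Δ𝚽(x))⟩ = ⟨ℓ_1 ≺ ℓ_2, Φ(x)⟩, where ℓ_1 ≺ (ℓ_2 ⊗ e_i) = (ℓ_1 ⋆ ℓ_2) ⊗ e_i is the half-quasi-shuffle product. In the base case this says: Σ_{k=1}^{L-1} ⟨ℓ_1, Φ(x)_k⟩ (⟨ℓ_2 ⊗ e_i, Φ(x)_{k+1}⟩ − ⟨ℓ_2 ⊗ e_i, Φ(x)_k⟩) = ⟨(ℓ_1 ⋆ ℓ_2) ⊗ e_i, Φ(x)_L⟩, where ⋆ is the quasi-shuffle product satisfying ⟨ℓ_1, Φ(x)_k⟩⟨ℓ_2, Φ(x)_k⟩ = ⟨ℓ_1 ⋆ ℓ_2, Φ(x)_k⟩. -/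
import Mathlib

/-- Φ_m(x₁,...,x_L) = Σ_{1 ≤ i₁ < ... < i_m ≤ L} x_{i₁} ⊗ ... ⊗ x_{i_m} ∈ (ℝ^d)^{⊗m},
given in coordinates: its coordinate at a multi-index idx : Fin m → Fin d. -/
def PhiM (d m : ℕ) (x : List (Fin d → ℝ)) : (Fin m → Fin d) → ℝ :=
  fun idx => ∑ f ∈ Finset.univ.filter
      (fun f : Fin m → Fin x.length => ∀ a b : Fin m, a < b → f a < f b),
    ∏ k, x.get (f k) (idx k)

/-- The pairing ⟨ℓ, Φ_m(x)⟩ of a degree-m functional ℓ (in coordinates) with Φ_m(x). -/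
def pairPhi (d m : ℕ) (ℓ : (Fin m → Fin d) → ℝ) (x : List (Fin d → ℝ)) : ℝ :=
  ∑ idx : Fin m → Fin d, ℓ idx * PhiM d m x idx

/-- The functional ℓ ⊗ e_i on degree m+1, for ℓ a degree-m functional. -/
def extFun (d m : ℕ) (ℓ : (Fin m → Fin d) → ℝ) (i : Fin d) :
    (Fin (m + 1) → Fin d) → ℝ :=
  fun idx => ℓ (fun k => idx k.castSucc) * (if idx (Fin.last m) = i then 1 else 0)

lemma PhiM_take (d m : ℕ) (x : List (Fin d → ℝ)) (k : ℕ) (hk : k ≤ x.length)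
    (idx : Fin m → Fin d) :
    PhiM d m (x.take k) idx =
      ∑ f ∈ Finset.univ.filter
          (fun f : Fin m → Fin x.length =>
            (∀ a b : Fin m, a < b → f a < f b) ∧ ∀ a, (f a : ℕ) < k),
        ∏ a, x.get (f a) (idx a) := by
  have hlen : (x.take k).length = k := by
    simp [List.length_take, hk]
  unfold PhiM
  refine Finset.sum_bij
    (fun f _ => fun a => (⟨(f a : ℕ), by
      have h := (f a).isLt; omega⟩ : Fin x.length)) ?_ ?_ ?_ ?_
  · intro f hf
    simp only [Finset.mem_filter, Finset.mem_univ, true_and] at hf ⊢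
    refine ⟨fun a b hab => ?_, fun a => ?_⟩
    · exact Fin.mk_lt_mk.mpr (Fin.lt_def.mp (hf a b hab))
    · have h := (f a).isLt; omega
  · intro f1 h1 f2 h2 heq
    funext a
    have := congrFun heq a
    exact Fin.ext (by simpa using congrArg Fin.val this)
  · intro g hg
    simp only [Finset.mem_filter, Finset.mem_univ, true_and] at hg
    refine ⟨fun a => (⟨(g a : ℕ), by rw [hlen]; exact hg.2 a⟩ : Fin (x.take k).length),
      ?_, ?_⟩
    · simp only [Finset.mem_filter, Finset.mem_univ, true_and]
      intro a b hab
      exact Fin.mk_lt_mk.mpr (Fin.lt_def.mp (hg.1 a b hab))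
    · funext a; exact Fin.ext rfl
  · intro f hf
    refine Finset.prod_congr rfl fun a _ => ?_
    simp [List.get_eq_getElem, List.getElem_take]

lemma PhiM_diff (d m : ℕ) (x : List (Fin d → ℝ)) (k : ℕ) (hk : k < x.length)
    (idx : Fin (m + 1) → Fin d) :
    PhiM d (m + 1) (x.take (k + 1)) idx - PhiM d (m + 1) (x.take k) idx =
      PhiM d m (x.take k) (fun a => idx a.castSucc) * x.get ⟨k, hk⟩ (idx (Fin.last m)) := by
  rw [PhiM_take d (m+1) x (k+1) hk idx, PhiM_take d (m+1) x k (le_of_lt hk) idx,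
    PhiM_take d m x k (le_of_lt hk) (fun a => idx a.castSucc)]
  have hsub : (Finset.univ.filter
      (fun f : Fin (m+1) → Fin x.length =>
        (∀ a b : Fin (m+1), a < b → f a < f b) ∧ ∀ a, (f a : ℕ) < k)) ⊆
      (Finset.univ.filter
      (fun f : Fin (m+1) → Fin x.length =>
        (∀ a b : Fin (m+1), a < b → f a < f b) ∧ ∀ a, (f a : ℕ) < k + 1)) := by
    intro f hf
    simp only [Finset.mem_filter, Finset.mem_univ, true_and] at hf ⊢
    exact ⟨hf.1, fun a => Nat.lt_succ_of_lt (hf.2 a)⟩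
  rw [← Finset.sum_sdiff_eq_sub hsub, Finset.sum_mul]
  have hchar : ∀ f : Fin (m+1) → Fin x.length,
      f ∈ (Finset.univ.filter
        (fun f : Fin (m+1) → Fin x.length =>
          (∀ a b : Fin (m+1), a < b → f a < f b) ∧ ∀ a, (f a : ℕ) < k + 1)) \
        (Finset.univ.filter
        (fun f : Fin (m+1) → Fin x.length =>
          (∀ a b : Fin (m+1), a < b → f a < f b) ∧ ∀ a, (f a : ℕ) < k)) ↔
      (∀ a b : Fin (m+1), a < b → f a < f b) ∧
        (∀ a : Fin m, (f a.castSucc : ℕ) < k) ∧ (f (Fin.last m) : ℕ) = k := by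
    intro f
    simp only [Finset.mem_sdiff, Finset.mem_filter, Finset.mem_univ, true_and, not_and]
    constructor
    · rintro ⟨⟨hs, hlt⟩, hnot⟩
      have hex : ∃ a, ¬ ((f a : ℕ) < k) := by
        by_contra h; push_neg at h; exact (hnot hs) h
      obtain ⟨a, ha⟩ := hex
      have hmax : ∀ b : Fin (m+1), f b ≤ f (Fin.last m) := by
        intro b
        rcases lt_or_eq_of_le (Fin.le_last b) with h | h
        · exact le_of_lt (hs _ _ h)
        · rw [h]
      have hlast : (f (Fin.last m) : ℕ) = k := by
        have h1 : k ≤ (f a : ℕ) := not_lt.mp ha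
        have h2 : (f a : ℕ) ≤ (f (Fin.last m) : ℕ) := hmax a
        have h3 := hlt (Fin.last m)
        omega
      refine ⟨hs, fun a' => ?_, hlast⟩
      have := hs _ _ (Fin.castSucc_lt_last a')
      rw [Fin.lt_def, hlast] at this
      exact this
    · rintro ⟨hs, hcast, hlast⟩
      refine ⟨⟨hs, fun a => ?_⟩, fun _ h => ?_⟩
      · rcases lt_or_eq_of_le (Fin.le_last a) with h | h
        · have := hs _ _ h
          rw [Fin.lt_def, hlast] at this
          omega
        · rw [h, hlast]; omega
      · have := h (Fin.last m)
        omega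
  refine Finset.sum_bij (fun f _ => fun a : Fin m => f a.castSucc) ?_ ?_ ?_ ?_
  · intro f hf
    rw [hchar] at hf
    simp only [Finset.mem_filter, Finset.mem_univ, true_and]
    exact ⟨fun a b hab => hf.1 _ _ (Fin.castSucc_lt_castSucc_iff.mpr hab), hf.2.1⟩
  · intro f1 h1 f2 h2 heq
    rw [hchar] at h1 h2
    funext a
    rcases lt_or_eq_of_le (Fin.le_last a) with h | h
    · have ha : a = (a.castLT (by simpa [Fin.lt_def] using h) : Fin m).castSucc := by
        simp [Fin.castSucc_castLT]
      rw [ha]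
      exact congrFun heq _
    · rw [h]
      exact Fin.ext (by rw [h1.2.2, h2.2.2])
  · intro g hg
    simp only [Finset.mem_filter, Finset.mem_univ, true_and] at hg
    refine ⟨Fin.snoc g ⟨k, hk⟩, ?_, ?_⟩
    · rw [hchar]
      refine ⟨?_, fun a => by simpa using hg.2 a, by simp⟩
      intro a b hab
      induction b using Fin.lastCases with
      | last =>
        induction a using Fin.lastCases with
        | last => exact absurd hab (lt_irrefl _)
        | cast a' =>
          simp only [Fin.snoc_castSucc, Fin.snoc_last]
          exact Fin.lt_def.mpr (hg.2 a')
      | cast b' =>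
        induction a using Fin.lastCases with
        | last => exact absurd (lt_trans hab (Fin.castSucc_lt_last b')) (lt_irrefl _)
        | cast a' =>
          simp only [Fin.snoc_castSucc]
          exact hg.1 a' b' (Fin.castSucc_lt_castSucc_iff.mp hab)
    · funext a; simp
  · intro f hf
    rw [hchar] at hf
    rw [Fin.prod_univ_castSucc]
    congr 1
    have : f (Fin.last m) = ⟨k, hk⟩ := Fin.ext hf.2.2
    rw [this]

lemma pairPhi_diff (d m : ℕ) (ℓ : (Fin m → Fin d) → ℝ) (i : Fin d)
    (x : List (Fin d → ℝ)) (k : ℕ) (hk : k < x.length) :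
    pairPhi d (m + 1) (extFun d m ℓ i) (x.take (k + 1)) -
      pairPhi d (m + 1) (extFun d m ℓ i) (x.take k) =
      pairPhi d m ℓ (x.take k) * x.get ⟨k, hk⟩ i := by
  unfold pairPhi
  rw [← Finset.sum_sub_distrib]
  have hstep : ∀ idx : Fin (m+1) → Fin d,
      extFun d m ℓ i idx * PhiM d (m + 1) (x.take (k+1)) idx -
        extFun d m ℓ i idx * PhiM d (m + 1) (x.take k) idx =
      extFun d m ℓ i idx *
        (PhiM d m (x.take k) (fun a => idx a.castSucc) *
          x.get ⟨k, hk⟩ (idx (Fin.last m))) := by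
    intro idx
    rw [← mul_sub, PhiM_diff d m x k hk idx]
  rw [Finset.sum_congr rfl fun idx _ => hstep idx]
  rw [← Fintype.sum_equiv (Fin.snocEquiv (n := m) (fun _ => Fin d))
    (fun p => extFun d m ℓ i ((Fin.snocEquiv (n := m) (fun _ => Fin d)) p) *
      (PhiM d m (x.take k) (fun a => (Fin.snocEquiv (n := m) (fun _ => Fin d)) p a.castSucc) *
        x.get ⟨k, hk⟩ ((Fin.snocEquiv (n := m) (fun _ => Fin d)) p (Fin.last m))))
    _ (fun p => rfl)]
  rw [Fintype.sum_prod_type, Finset.sum_mul]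
  rw [Finset.sum_comm]
  refine Finset.sum_congr rfl fun g _ => ?_
  have hsnoc : ∀ j : Fin d, (Fin.snocEquiv (n := m) (fun _ => Fin d)) (j, g) = Fin.snoc (α := fun _ => Fin d) g j := by
    intro j; rfl
  simp only [hsnoc, extFun, Fin.snoc_last]
  have hinit : ∀ j : Fin d, (fun a : Fin m => Fin.snoc (α := fun _ => Fin d) g j a.castSucc) = g := by
    intro j; funext a; simp
  simp only [hinit]
  have hterm : ∀ j : Fin d,
      ℓ g * (if j = i then (1:ℝ) else 0) *
        (PhiM d m (x.take k) g * x.get ⟨k, hk⟩ j) =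
      if j = i then ℓ g * (PhiM d m (x.take k) g * x.get ⟨k, hk⟩ j) else 0 := by
    intro j; split <;> ring
  rw [Finset.sum_congr rfl fun j _ => hterm j,
    Finset.sum_ite_eq' Finset.univ i
      (fun j => ℓ g * (PhiM d m (x.take k) g * x.get ⟨k, hk⟩ j))]
  simp only [Finset.mem_univ, if_true]
  ring

lemma pairPhi_nil (d m : ℕ) (ℓ : (Fin (m + 1) → Fin d) → ℝ) :
    pairPhi d (m + 1) ℓ [] = 0 := by
  have h : ∀ idx, PhiM d (m + 1) ([] : List (Fin d → ℝ)) idx = 0 := by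
    intro idx
    unfold PhiM
    haveI : IsEmpty (Fin (m + 1) → Fin (List.length ([] : List (Fin d → ℝ)))) :=
      ⟨fun f => (f 0).elim0⟩
    rw [Finset.filter_eq_empty_iff.mpr (fun {f} _ => (IsEmpty.false f).elim)]
    simp
  simp [pairPhi, h]

/-- The half-quasi-shuffle identity (base case): if ℓ₁ ⋆ ℓ₂ = ℓ₁₂ in the sense of
the quasi-shuffle characterization ⟨ℓ₁, Φ(x)_k⟩⟨ℓ₂, Φ(x)_k⟩ = ⟨ℓ₁₂, Φ(x)_k⟩
on all prefixes, then
Σ_{k=1}^{L-1} ⟨ℓ₁, Φ(x)_k⟩ (⟨ℓ₂ ⊗ e_i, Φ(x)_{k+1}⟩ − ⟨ℓ₂ ⊗ e_i, Φ(x)_k⟩)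
  = ⟨(ℓ₁ ⋆ ℓ₂) ⊗ e_i, Φ(x)_L⟩,
i.e. ⟨e_{ℓ₁} ⊗₍₃₎ e_{ℓ₂⊗e_i}, Φ(Δ𝚽(x))⟩ = ⟨ℓ₁ ≺ (ℓ₂ ⊗ e_i), Φ(x)⟩, with
ℓ₁ ≺ (ℓ₂ ⊗ e_i) = (ℓ₁ ⋆ ℓ₂) ⊗ e_i. (Here ℓ₁, ℓ₁₂ have positive degree.) -/
theorem stmt17 (d m1 m2 m3 : ℕ) (x : List (Fin d → ℝ))
    (l1 : (Fin (m1 + 1) → Fin d) → ℝ) (l2 : (Fin m2 → Fin d) → ℝ)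
    (l12 : (Fin (m3 + 1) → Fin d) → ℝ) (i : Fin d)
    (hstar : ∀ k : ℕ,
      pairPhi d (m1 + 1) l1 (x.take k) * pairPhi d m2 l2 (x.take k) =
        pairPhi d (m3 + 1) l12 (x.take k)) :
    (∑ k ∈ Finset.Icc 1 (x.length - 1),
        pairPhi d (m1 + 1) l1 (x.take k) *
          (pairPhi d (m2 + 1) (extFun d m2 l2 i) (x.take (k + 1)) -
            pairPhi d (m2 + 1) (extFun d m2 l2 i) (x.take k))) =
      pairPhi d (m3 + 2) (extFun d (m3 + 1) l12 i) x := by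
  have hLHS : (∑ k ∈ Finset.Icc 1 (x.length - 1),
      pairPhi d (m1 + 1) l1 (x.take k) *
        (pairPhi d (m2 + 1) (extFun d m2 l2 i) (x.take (k + 1)) -
          pairPhi d (m2 + 1) (extFun d m2 l2 i) (x.take k))) =
      ∑ k ∈ Finset.Icc 1 (x.length - 1),
        pairPhi d (m3 + 1) l12 (x.take k) * x.getD k (fun _ => 0) i := by
    refine Finset.sum_congr rfl fun k hkm => ?_
    simp only [Finset.mem_Icc] at hkm
    have hk : k < x.length := by omega
    rw [pairPhi_diff d m2 l2 i x k hk, ← mul_assoc, hstar k,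
      List.getD_eq_getElem x _ hk]
    rfl
  rw [hLHS]
  have h0 : pairPhi d (m3 + 2) (extFun d (m3 + 1) l12 i) (x.take 0) = 0 := by
    rw [List.take_zero]; exact pairPhi_nil d (m3 + 1) _
  have hx := Finset.sum_range_sub
    (fun k => pairPhi d (m3 + 2) (extFun d (m3 + 1) l12 i) (x.take k)) x.length
  simp only [h0, sub_zero, List.take_length] at hx
  rw [← hx]
  have htel : ∀ k ∈ Finset.range x.length,
      pairPhi d (m3 + 2) (extFun d (m3 + 1) l12 i) (x.take (k + 1)) -
        pairPhi d (m3 + 2) (extFun d (m3 + 1) l12 i) (x.take k) =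
      pairPhi d (m3 + 1) l12 (x.take k) * x.getD k (fun _ => 0) i := by
    intro k hkr
    have hk : k < x.length := Finset.mem_range.mp hkr
    rw [pairPhi_diff d (m3 + 1) l12 i x k hk, List.getD_eq_getElem x _ hk]
    rfl
  rw [Finset.sum_congr rfl htel]
  rcases Nat.eq_zero_or_pos x.length with hz | hpos
  · simp [hz]
  · obtain ⟨n, hn⟩ := Nat.exists_eq_succ_of_ne_zero (Nat.pos_iff_ne_zero.mp hpos)
    rw [hn]
    have hr : Finset.range (n + 1) = insert 0 (Finset.Icc 1 n) := by
      ext a; simp only [Finset.mem_range, Finset.mem_insert, Finset.mem_Icc]; omega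
    rw [hr, Finset.sum_insert (by simp)]
    have hzero : pairPhi d (m3 + 1) l12 (x.take 0) * x.getD 0 (fun _ => 0) i = 0 := by
      rw [List.take_zero, pairPhi_nil]; ring
    rw [hzero, zero_add]
    simp
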